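/- arXiv:2202.13089 — 13 statements merged into one kernel-verified Lean document; each statement's English description precedes it below -/
import Mathlib

section
/- A choice function f on a finite set X is path-independent if and only if it satisfies both Heredity (A ⊆ B implies f(B) ∩ A ⊆ f(A)) and Outcast (f(A) ⊆ B ⊆ A implies f(A) = f(B)). -/
theorem plott_iff_heredity_outcast {X : Type*} [Fintype X] [DecidableEq X]
    (f : Finset X → Finset X)
    (hsub : ∀ A, f A ⊆ A) :
    (∀ A B, f (A ∪ B) = f (f A ∪ B)) ↔
      ((∀ A B : Finset X, A ⊆ B → f B ∩ A ⊆ f A) ∧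
       (∀ A B : Finset X, f A ⊆ B → B ⊆ A → f A = f B)) := by
  constructor
  · intro hPI
    have key : ∀ A B : Finset X, f (A ∪ B) = f (f A ∪ f B) := by
      intro A B
      rw [hPI A B, Finset.union_comm (f A) B, hPI B (f A),
        Finset.union_comm (f B) (f A)]
    constructor
    · intro A B hAB x hx
      rw [Finset.mem_inter] at hx
      obtain ⟨hxB, hxA⟩ := hx
      have hBeq : A ∪ B \ A = B := Finset.union_sdiff_of_subset hAB
      have : x ∈ f (f A ∪ f (B \ A)) := by rw [← key, hBeq]; exact hxB
      have hx' : x ∈ f A ∪ f (B \ A) := hsub _ this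
      rcases Finset.mem_union.mp hx' with h | h
      · exact h
      · exact absurd (Finset.mem_sdiff.mp (hsub _ h)).2 (by simp [hxA])
    · intro A B hfB hBA
      have h1 : f A ∪ B = B := Finset.union_eq_right.mpr hfB
      have h2 : A ∪ B = A := Finset.union_eq_left.mpr hBA
      calc f A = f (A ∪ B) := by rw [h2]
        _ = f (f A ∪ B) := hPI A B
        _ = f B := by rw [h1]
  · rintro ⟨hH, hO⟩ A B
    have h1 : f (A ∪ B) ⊆ f A ∪ B := by
      intro x hx
      by_cases hxB : x ∈ B
      · exact Finset.mem_union_right _ hxB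
      · have hxA : x ∈ A := by
          rcases Finset.mem_union.mp (hsub _ hx) with h | h
          · exact h
          · exact absurd h hxB
        exact Finset.mem_union_left _
          (hH A (A ∪ B) Finset.subset_union_left (Finset.mem_inter.mpr ⟨hx, hxA⟩))
    have h2 : f A ∪ B ⊆ A ∪ B := Finset.union_subset_union (hsub A) subset_rfl
    exact hO (A ∪ B) (f A ∪ B) h1 h2
end

section
/- If f is a path-independent choice function on a finite set X and A ⊆ f(B) for some B ⊆ X, then f(A) = A. -/
theorem plott_subset_of_choice {X : Type*} [Fintype X] [DecidableEq X]
    (f : Finset X → Finset X)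
    (hsub : ∀ A, f A ⊆ A)
    (hpi : ∀ A B, f (A ∪ B) = f (f A ∪ B)) :
    ∀ A B : Finset X, A ⊆ f B → f A = A := by
  intro A B hAB
  have hfix : ∀ S, f S = f (f S) := fun S => by
    have := hpi S ∅; simpa using this
  have chern : ∀ S T : Finset X, T ⊆ S → f S ∩ T ⊆ f T := by
    intro S T hTS x hx
    have h1 : f S = f (f T ∪ (S \ T)) := by
      have := hpi T (S \ T)
      rwa [Finset.union_sdiff_of_subset hTS] at this
    rw [Finset.mem_inter] at hx
    have hx2 : x ∈ f T ∪ (S \ T) := hsub _ (h1 ▸ hx.1)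
    rcases Finset.mem_union.mp hx2 with h | h
    · exact h
    · exact absurd hx.2 (Finset.mem_sdiff.mp h).2
  apply Finset.Subset.antisymm (hsub A)
  intro x hx
  exact chern (f B) A hAB (Finset.mem_inter.mpr ⟨(hfix B) ▸ hAB hx, hx⟩)
end

section
/- The union of two path-independent choice functions on a finite set X is again a path-independent choice function, where the union is defined pointwise: (f ∪ g)(A) = f(A) ∪ g(A). -/
lemma pi_sandwich {X : Type*} [DecidableEq X] (f : Finset X → Finset X)
    (hfpi : ∀ A B, f (A ∪ B) = f (f A ∪ B))
    {A S : Finset X} (h1 : f A ⊆ S) (h2 : S ⊆ A) : f S = f A := by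
  have : A ∪ S = A := Finset.union_eq_left.mpr h2
  have : f A = f (f A ∪ S) := by rw [← hfpi, this]
  rw [this, Finset.union_eq_right.mpr h1]

theorem plott_union_of_plott {X : Type*} [Fintype X] [DecidableEq X]
    (f g : Finset X → Finset X)
    (hfsub : ∀ A, f A ⊆ A) (hgsub : ∀ A, g A ⊆ A)
    (hfpi : ∀ A B, f (A ∪ B) = f (f A ∪ B))
    (hgpi : ∀ A B, g (A ∪ B) = g (g A ∪ B)) :
    (∀ A, f A ∪ g A ⊆ A) ∧
    (∀ A B : Finset X, f (A ∪ B) ∪ g (A ∪ B) =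
      f ((f A ∪ g A) ∪ B) ∪ g ((f A ∪ g A) ∪ B)) := by
  constructor
  · intro A
    exact Finset.union_subset (hfsub A) (hgsub A)
  · intro A B
    set S := (f A ∪ g A) ∪ B with hS
    have hSsub : S ⊆ A ∪ B :=
      Finset.union_subset
        (Finset.union_subset ((hfsub A).trans Finset.subset_union_left)
          ((hgsub A).trans Finset.subset_union_left))
        Finset.subset_union_right
    have hfin : f (A ∪ B) ⊆ S := by
      rw [hfpi A B]
      exact (hfsub _).trans (Finset.union_subset
        (Finset.subset_union_left.trans Finset.subset_union_left)
        Finset.subset_union_right)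
    have hgin : g (A ∪ B) ⊆ S := by
      rw [hgpi A B]
      exact (hgsub _).trans (Finset.union_subset
        (Finset.subset_union_right.trans Finset.subset_union_left)
        Finset.subset_union_right)
    rw [pi_sandwich f hfpi hfin hSsub, pi_sandwich g hgpi hgin hSsub]
end

section
/- Let π : X → Y be a map of finite sets and g a path-independent choice function on Y. Define f on X by f(A) = A ∩ π⁻¹(g(π(A))). Then f is a path-independent choice function on X. -/
theorem plott_pullback {X Y : Type*} [Fintype X] [Fintype Y] [DecidableEq X] [DecidableEq Y]
    (π : X → Y)
    (g : Finset Y → Finset Y)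
    (hgsub : ∀ B, g B ⊆ B)
    (hgpi : ∀ A B, g (A ∪ B) = g (g A ∪ B)) :
    (∀ A : Finset X, A.filter (fun x => π x ∈ g (A.image π)) ⊆ A) ∧
    (∀ A B : Finset X,
      (A ∪ B).filter (fun x => π x ∈ g ((A ∪ B).image π)) =
      (A.filter (fun x => π x ∈ g (A.image π)) ∪ B).filter
        (fun x => π x ∈ g ((A.filter (fun x => π x ∈ g (A.image π)) ∪ B).image π))) := by
  constructor
  · intro A; exact Finset.filter_subset _ _
  · intro A B
    set fA := A.filter (fun x => π x ∈ g (A.image π)) with hfA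
    have himg : fA.image π = g (A.image π) := by
      apply Finset.Subset.antisymm
      · intro y hy
        simp only [hfA, Finset.mem_image, Finset.mem_filter] at hy
        obtain ⟨x, ⟨hxA, hxg⟩, rfl⟩ := hy
        exact hxg
      · intro y hy
        have hyA : y ∈ A.image π := hgsub _ hy
        obtain ⟨x, hxA, rfl⟩ := Finset.mem_image.mp hyA
        exact Finset.mem_image.mpr ⟨x, Finset.mem_filter.mpr ⟨hxA, hy⟩, rfl⟩
    have hS : g ((fA ∪ B).image π) = g ((A ∪ B).image π) := by
      rw [Finset.image_union, Finset.image_union, himg, ← hgpi]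
    have halpha : ∀ y, y ∈ g ((A ∪ B).image π) → y ∈ A.image π → y ∈ g (A.image π) := by
      intro y hy hyA
      have h1 : (A ∪ B).image π = A.image π ∪ (B.image π \ A.image π) := by
        rw [Finset.image_union, Finset.union_sdiff_self_eq_union]
      rw [h1, hgpi] at hy
      rcases Finset.mem_union.mp (hgsub _ hy) with h | h
      · exact h
      · exact absurd hyA (Finset.mem_sdiff.mp h).2
    rw [hS]
    ext x
    simp only [Finset.mem_filter, Finset.mem_union, hfA]
    constructor
    · rintro ⟨hx | hx, hg⟩
      · exact ⟨Or.inl ⟨hx, halpha _ hg (Finset.mem_image_of_mem π hx)⟩, hg⟩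
      · exact ⟨Or.inr hx, hg⟩
    · rintro ⟨hx | hx, hg⟩
      · exact ⟨Or.inl hx.1, hg⟩
      · exact ⟨Or.inr hx, hg⟩
end

section
/- Every non-empty-valued path-independent choice function f on a finite set X (i.e., f(A) ≠ ∅ whenever A ≠ ∅) can be represented as the union of finitely many choice functions each induced by a linear order: there exist linear orders ≤_1, …, ≤_k on X such that f(A) = {max_{≤_1}(A), …, max_{≤_k}(A)} for every nonempty A ⊆ X. (Aizerman–Malishevski theorem.) -/
set_option linter.unusedSectionVars false

section AMaux

variable {X : Type*} [Fintype X] [DecidableEq X]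
variable {f : Finset X → Finset X}

/-- Chernoff condition from path independence. -/
lemma am_chernoff (hsub : ∀ A, f A ⊆ A) (hpi : ∀ A B, f (A ∪ B) = f (f A ∪ B))
    {B C : Finset X} (hBC : B ⊆ C) {a : X} (haB : a ∈ B) (haC : a ∈ f C) : a ∈ f B := by
  have h1 : B ∪ (C \ B) = C := Finset.union_sdiff_of_subset hBC
  have h2 := hpi B (C \ B)
  rw [h1] at h2
  have h3 : a ∈ f B ∪ (C \ B) := hsub _ (h2 ▸ haC)
  rcases Finset.mem_union.mp h3 with h | h
  · exact h
  · exact absurd (Finset.mem_sdiff.mp h).2 (by simp [haB])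

lemma am_idem (hpi : ∀ A B, f (A ∪ B) = f (f A ∪ B)) (A : Finset X) : f (f A) = f A := by
  have := hpi A ∅
  simpa using this.symm

lemma am_eq (hpi : ∀ A B, f (A ∪ B) = f (f A ∪ B)) {S A : Finset X}
    (hAS : A ⊆ S) (hfSA : f S ⊆ A) : f S = f A := by
  have := hpi S A
  rwa [Finset.union_eq_left.mpr hAS, Finset.union_eq_right.mpr hfSA] at this

/-- One greedy step: put `y ∈ f S` first, then follow `g'` on `S.erase y`. -/
lemma am_step (hsub : ∀ A, f A ⊆ A) (hpi : ∀ A B, f (A ∪ B) = f (f A ∪ B))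
    {S : Finset X} {y : X} (hy : y ∈ f S)
    (g' : X → ℕ) (hinj' : Set.InjOn g' ↑(S.erase y))
    (hB' : ∀ B ⊆ S.erase y, ∀ a ∈ B, (∀ b ∈ B, g' a ≤ g' b) → a ∈ f B) :
    ∃ g : X → ℕ, g y = 0 ∧ (∀ z, z ≠ y → g z = g' z + 1) ∧
      Set.InjOn g ↑S ∧
      ∀ B ⊆ S, ∀ a ∈ B, (∀ b ∈ B, g a ≤ g b) → a ∈ f B := by
  refine ⟨fun z => if z = y then 0 else g' z + 1, by simp, fun z hz => by simp [hz], ?_, ?_⟩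
  · intro z1 hz1 z2 hz2 h
    simp only [Finset.mem_coe] at hz1 hz2
    by_cases h1 : z1 = y <;> by_cases h2 : z2 = y
    · rw [h1, h2]
    · simp [h1, h2] at h
    · simp [h1, h2] at h
    · simp only [h1, h2, if_neg, if_false] at h
      exact hinj' (by simp [Finset.mem_erase, h1, hz1])
        (by simp [Finset.mem_erase, h2, hz2]) (by omega)
  · intro B hBS a haB hmin
    by_cases hyB : y ∈ B
    · have hay : a = y := by
        have := hmin y hyB
        by_contra hne'
        simp [hne'] at this
      subst hay
      exact am_chernoff hsub hpi hBS haB hy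
    · have hBS' : B ⊆ S.erase y := fun b hb =>
        Finset.mem_erase.mpr ⟨fun h => hyB (h ▸ hb), hBS hb⟩
      have hay : a ≠ y := fun h => hyB (h ▸ haB)
      refine hB' B hBS' a haB fun b hb => ?_
      have hby : b ≠ y := fun h => hyB (h ▸ hb)
      have := hmin b hb
      simp only [hay, hby, if_neg, if_false] at this
      omega

/-- Main construction: for `x ∈ f A`, a priority function whose minimum on any menu
is chosen, and which puts `x` first within `A`. -/
lemma am_main (hsub : ∀ A, f A ⊆ A) (hpi : ∀ A B, f (A ∪ B) = f (f A ∪ B))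
    (hne : ∀ A : Finset X, A.Nonempty → (f A).Nonempty) :
    ∀ n (S A : Finset X) (x : X), S.card ≤ n → A ⊆ S → x ∈ f A →
    ∃ g : X → ℕ, Set.InjOn g ↑S ∧
      (∀ B ⊆ S, ∀ a ∈ B, (∀ b ∈ B, g a ≤ g b) → a ∈ f B) ∧
      (∀ b ∈ A, g x ≤ g b) := by
  intro n
  induction n with
  | zero =>
    intro S A x hcard hAS hx
    have hxS : x ∈ S := hAS (hsub A hx)
    rw [Finset.card_eq_zero.mp (Nat.le_zero.mp hcard)] at hxS
    simp at hxS
  | succ n ih =>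
    intro S A x hcard hAS hxA
    have hxS : x ∈ S := hAS (hsub A hxA)
    -- a generic way of getting g' for S.erase y
    have getg' : ∀ y ∈ S, ∃ g' : X → ℕ, Set.InjOn g' ↑(S.erase y) ∧
        ∀ B ⊆ S.erase y, ∀ a ∈ B, (∀ b ∈ B, g' a ≤ g' b) → a ∈ f B := by
      intro y hyS
      by_cases hS' : (S.erase y).Nonempty
      · obtain ⟨x', hx'⟩ := hne _ hS'
        have hx'' : x' ∈ f (f (S.erase y)) := by rw [am_idem hpi]; exact hx'
        have hcard' : (S.erase y).card ≤ n := by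
          have := Finset.card_erase_lt_of_mem hyS
          omega
        obtain ⟨g', h1, h2, _⟩ := ih (S.erase y) (f (S.erase y)) x' hcard' (hsub _) hx''
        exact ⟨g', h1, h2⟩
      · refine ⟨fun _ => 0, ?_, ?_⟩
        · rw [Finset.not_nonempty_iff_eq_empty.mp hS']
          simp
        · intro B hB a haB _
          rw [Finset.not_nonempty_iff_eq_empty.mp hS', Finset.subset_empty] at hB
          simp [hB] at haB
    by_cases hfSA : f S ⊆ A
    · -- f S = f A, so x ∈ f S; pick x first
      have hxfS : x ∈ f S := (am_eq hpi hAS hfSA) ▸ hxA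
      obtain ⟨g', hinj', hB'⟩ := getg' x hxS
      obtain ⟨g, hgy, _, hinj, hB⟩ := am_step hsub hpi hxfS g' hinj' hB'
      exact ⟨g, hinj, hB, fun b _ => by rw [hgy]; omega⟩
    · obtain ⟨y, hyfS, hyA⟩ := Finset.not_subset.mp hfSA
      have hyS : y ∈ S := hsub _ hyfS
      have hAS' : A ⊆ S.erase y := fun b hb =>
        Finset.mem_erase.mpr ⟨fun h => hyA (h ▸ hb), hAS hb⟩
      have hcard' : (S.erase y).card ≤ n := by
        have := Finset.card_erase_lt_of_mem hyS
        omega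
      obtain ⟨g', hinj', hB', hA'⟩ := ih (S.erase y) A x hcard' hAS' hxA
      obtain ⟨g, hgy, hgz, hinj, hB⟩ := am_step hsub hpi hyfS g' hinj' hB'
      refine ⟨g, hinj, hB, fun b hb => ?_⟩
      have hbx : x ≠ y := fun h => hyA (h ▸ hsub A hxA)
      have hby : b ≠ y := fun h => hyA (h ▸ hb)
      rw [hgz x hbx, hgz b hby]
      have := hA' b hb
      omega

end AMaux

theorem aizerman_malishevski {X : Type*} [Fintype X] [DecidableEq X]
    (f : Finset X → Finset X)
    (hsub : ∀ A, f A ⊆ A)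
    (hpi : ∀ A B, f (A ∪ B) = f (f A ∪ B))
    (hne : ∀ A : Finset X, A.Nonempty → (f A).Nonempty) :
    ∃ (k : ℕ) (r : Fin k → X → X → Prop),
      (∀ j, IsLinearOrder X (r j)) ∧
      (∀ A : Finset X, A.Nonempty →
        ∀ a : X, a ∈ f A ↔ a ∈ A ∧ ∃ j, ∀ b ∈ A, r j b a) := by
  classical
  set T := {p : Finset X × X // p.2 ∈ f p.1} with hT
  have hmain := am_main hsub hpi hne
  choose g hinj hB hA using fun t : T =>
    hmain (Finset.univ.card) Finset.univ t.1.1 t.1.2 le_rfl (Finset.subset_univ _) t.2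
  set e := (Fintype.equivFin T).symm with he
  refine ⟨Fintype.card T, fun j b a => g (e j) a ≤ g (e j) b, ?_, ?_⟩
  · intro j
    have hinjj : Function.Injective (g (e j)) := fun a b h =>
      hinj (e j) (by simp) (by simp) h
    exact {
      refl := fun a => le_refl _
      trans := fun a b c hab hbc => le_trans hbc hab
      antisymm := fun a b h1 h2 => hinjj (le_antisymm h2 h1)
      total := fun a b => (le_total (g (e j) b) (g (e j) a)).imp id id }
  · intro A _ a
    constructor
    · intro haf
      refine ⟨hsub A haf, e.symm ⟨(A, a), haf⟩, fun b hb => ?_⟩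
      show g (e (e.symm ⟨(A, a), haf⟩)) a ≤ g (e (e.symm ⟨(A, a), haf⟩)) b
      rw [Equiv.apply_symm_apply]
      exact hA ⟨(A, a), haf⟩ b hb
    · rintro ⟨haA, j, hj⟩
      exact hB (e j) A (Finset.subset_univ _) a haA hj
end

section
/- Let f be a non-empty-valued path-independent choice function on a finite set X. Say a linear order ≤ on X respects f if for every nonempty A ⊆ X the ≤-maximum of A belongs to f(A). Then for every nonempty A ⊆ X and every a ∈ f(A), there exists a linear order ≤ respecting f such that a is the ≤-maximum of A. -/
/-!
Enumerate `X` greedily, each element being chosen by `f` from the elements not yet enumerated,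
and rank earlier elements higher. The maximum `m` of any `B` was chosen from a superset `C` of `B`,
so `m ∈ f B` because path-independent choice is hereditary: `x ∈ f C` and `x ∈ B ⊆ C` give
`x ∈ f B`. To make `a` the maximum of `A`, choose outside `A` as long as `f` allows it; once it
does not, the remaining set `T ⊇ A` has `f T ⊆ A`, hence `f T = f A ∋ a`, and `a` is chosen next.
-/

open Finset

section GreedyEnumeration

variable {X : Type*} [DecidableEq X] {f : Finset X → Finset X}

def PathIndependent (f : Finset X → Finset X) : Prop :=
  ∀ A B, f (A ∪ B) = f (f A ∪ B)

theorem PathIndependent.mem_of_subset (hpi : PathIndependent f) (hsub : ∀ A, f A ⊆ A)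
    {B C : Finset X} (hBC : B ⊆ C) {x : X} (hxC : x ∈ f C) (hxB : x ∈ B) : x ∈ f B := by
  have hC : f C = f (f B ∪ C \ B) := by
    rw [← hpi, union_sdiff_of_subset hBC]
  have : x ∈ f B ∪ C \ B := hsub _ (hC ▸ hxC)
  simpa [hxB] using this

theorem PathIndependent.apply_eq_of_subset (hpi : PathIndependent f) {S T : Finset X}
    (hST : S ⊆ T) (hfT : f T ⊆ S) : f S = f T := by
  rw [← union_eq_right.mpr hfT, ← hpi, union_eq_left.mpr hST]

def IsGreedy (f : Finset X → Finset X) : List X → Prop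
  | [] => True
  | x :: L => x ∈ f (insert x L.toFinset) ∧ IsGreedy f L

theorem IsGreedy.mem_of_idxOf_le (hpi : PathIndependent f) (hsub : ∀ A, f A ⊆ A) :
    ∀ {L : List X}, IsGreedy f L → ∀ {B : Finset X}, B ⊆ L.toFinset → ∀ m ∈ B,
      (∀ b ∈ B, L.idxOf m ≤ L.idxOf b) → m ∈ f B
  | [], _, B, hB, m, hm, _ => by simp_all
  | x :: L, ⟨hx, hL⟩, B, hB, m, hm, hmin => by
    by_cases hxB : x ∈ B
    · have hmx : m = x := by
        by_contra hmx
        have := hmin x hxB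
        simp [List.idxOf_cons_ne L (Ne.symm hmx)] at this
      subst hmx
      exact hpi.mem_of_subset hsub (by simpa using hB) hx hxB
    · have hB' : B ⊆ L.toFinset := fun b hb => by
        simpa [ne_of_mem_of_not_mem hb hxB] using hB hb
      refine hL.mem_of_idxOf_le hpi hsub hB' m hm fun b hb => ?_
      have := hmin b hb
      rwa [List.idxOf_cons_ne L (ne_of_mem_of_not_mem hb hxB).symm,
        List.idxOf_cons_ne L (ne_of_mem_of_not_mem hm hxB).symm, Nat.succ_le_succ_iff] at this

theorem exists_isGreedy (hsub : ∀ A, f A ⊆ A) (hne : ∀ A : Finset X, A.Nonempty → (f A).Nonempty)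
    (T : Finset X) : ∃ L : List X, IsGreedy f L ∧ L.toFinset = T := by
  induction T using Finset.strongInduction with
  | H T ih =>
    obtain rfl | hT := T.eq_empty_or_nonempty
    · exact ⟨[], trivial, rfl⟩
    obtain ⟨x, hx⟩ := hne T hT
    obtain ⟨L, hL, hLT⟩ := ih (T.erase x) (erase_ssubset (hsub T hx))
    have hT : insert x L.toFinset = T := by rw [hLT, insert_erase (hsub T hx)]
    exact ⟨x :: L, ⟨hT ▸ hx, hL⟩, by simpa using hT⟩

theorem exists_isGreedy_idxOf_le (hpi : PathIndependent f) (hsub : ∀ A, f A ⊆ A)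
    (hne : ∀ A : Finset X, A.Nonempty → (f A).Nonempty) {A : Finset X} {a : X} (ha : a ∈ f A)
    (T : Finset X) (hAT : A ⊆ T) :
    ∃ L : List X, IsGreedy f L ∧ L.toFinset = T ∧ ∀ b ∈ A, L.idxOf a ≤ L.idxOf b := by
  induction T using Finset.strongInduction with
  | H T ih =>
    have haA : a ∈ A := hsub A ha
    by_cases hfT : f T ⊆ A
    · have haT : a ∈ f T := hpi.apply_eq_of_subset hAT hfT ▸ ha
      obtain ⟨L, hL, hLT⟩ := exists_isGreedy hsub hne (T.erase a)
      have hT : insert a L.toFinset = T := by rw [hLT, insert_erase (hAT haA)]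
      exact ⟨a :: L, ⟨hT ▸ haT, hL⟩, by simpa using hT, by simp⟩
    · obtain ⟨x, hxT, hxA⟩ := not_subset.mp hfT
      have hAT' : A ⊆ T.erase x := fun b hb =>
        mem_erase.mpr ⟨ne_of_mem_of_not_mem hb hxA, hAT hb⟩
      obtain ⟨L, hL, hLT, hLa⟩ := ih (T.erase x) (erase_ssubset (hsub T hxT)) hAT'
      have hT : insert x L.toFinset = T := by rw [hLT, insert_erase (hsub T hxT)]
      refine ⟨x :: L, ⟨hT ▸ hxT, hL⟩, by simpa using hT, fun b hb => ?_⟩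
      rw [List.idxOf_cons_ne L (ne_of_mem_of_not_mem hb hxA).symm,
        List.idxOf_cons_ne L (ne_of_mem_of_not_mem haA hxA).symm]
      exact Nat.succ_le_succ (hLa b hb)

theorem isLinearOrder_idxOf_ge {L : List X} (hL : ∀ x, x ∈ L) :
    IsLinearOrder X (fun b c => L.idxOf c ≤ L.idxOf b) :=
  Function.Injective.isLinearOrder_onFun (r := (· ≥ ·)) fun x _ hxy =>
    (List.idxOf_inj (hL x)).mp hxy

end GreedyEnumeration

theorem respecting_linear_order_exists {X : Type*} [Fintype X] [DecidableEq X]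
    (f : Finset X → Finset X)
    (hsub : ∀ A, f A ⊆ A)
    (hpi : ∀ A B, f (A ∪ B) = f (f A ∪ B))
    (hne : ∀ A : Finset X, A.Nonempty → (f A).Nonempty) :
    ∀ A : Finset X, A.Nonempty → ∀ a ∈ f A,
      ∃ r : X → X → Prop, IsLinearOrder X r ∧
        (∀ B : Finset X, ∀ m ∈ B, (∀ b ∈ B, r b m) → m ∈ f B) ∧
        (∀ b ∈ A, r b a) := by
  intro A _ a ha
  obtain ⟨L, hL, hLX, haL⟩ := exists_isGreedy_idxOf_le hpi hsub hne ha univ (subset_univ A)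
  have hmem : ∀ x, x ∈ L := fun x => by simp [← List.mem_toFinset, hLX]
  refine ⟨fun b c => L.idxOf c ≤ L.idxOf b, isLinearOrder_idxOf_ge hmem, ?_, haL⟩
  exact fun B => hL.mem_of_idxOf_le hpi hsub (by simp [hLX])
end

section
/- Let f be a path-independent choice function on a finite set X and define the Blair hyper-relation A ⪯ B iff f(A ∪ B) ⊆ B, on subsets of X. Then ⪯ is reflexive and transitive. -/
theorem blair_preorder {X : Type*} [Fintype X] [DecidableEq X]
    (f : Finset X → Finset X)
    (hsub : ∀ A, f A ⊆ A)
    (hpi : ∀ A B, f (A ∪ B) = f (f A ∪ B)) :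
    (∀ A : Finset X, f (A ∪ A) ⊆ A) ∧
    (∀ A B C : Finset X, f (A ∪ B) ⊆ B → f (B ∪ C) ⊆ C → f (A ∪ C) ⊆ C) := by
  have key : ∀ S T : Finset X, f S ⊆ T → T ⊆ S → f T = f S := by
    intro S T h1 h2
    have hS : S ∪ T = S := Finset.union_eq_left.mpr h2
    have hT : f S ∪ T = T := Finset.union_eq_right.mpr h1
    calc f T = f (f S ∪ T) := by rw [hT]
      _ = f (S ∪ T) := (hpi S T).symm
      _ = f S := by rw [hS]
  constructor
  · intro A; rw [Finset.union_self]; exact hsub A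
  · intro A B C hAB hBC
    set S := A ∪ B ∪ C with hSdef
    have h1 : f S = f (f (A ∪ B) ∪ C) := hpi (A ∪ B) C
    have h2 : f S ⊆ B ∪ C := by
      rw [h1]
      exact (hsub _).trans (Finset.union_subset_union_left hAB)
    have h3 : f (B ∪ C) = f S := key S (B ∪ C) h2 (by
      intro x hx
      simp only [hSdef, Finset.mem_union] at *
      tauto)
    have h4 : f S ⊆ C := h3 ▸ hBC
    have h5 : f (A ∪ C) = f S := key S (A ∪ C) (h4.trans Finset.subset_union_right) (by
      intro x hx
      simp only [hSdef, Finset.mem_union] at *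
      tauto)
    rw [h5]; exact h4
end

section
/- Consider a finite hypergraph (I, C) where each contract c ∈ C has participant set P(c) ⊆ I, each agent i has a path-independent choice function f_i on C(i) = {c ∈ C : i ∈ P(c)}. Let S be a stable system (f_i(S(i)) = S(i) for all i, and every b ∉ S satisfies b ∉ f_i(S(i) ∪ {b}) for some i ∈ P(b)) and let T satisfy f_i(T(i)) = T(i) for all i. If f_i(S(i) ∪ T(i)) ⊆ T(i) for every i ∈ I, then S = T. -/
theorem stable_pareto {I C : Type*} [Fintype I] [Fintype C] [DecidableEq I] [DecidableEq C]
    (P : C → Finset I) (hP : ∀ c, (P c).Nonempty)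
    (f : I → Finset C → Finset C)
    (hf : ∀ (i : I) (A : Finset C),
      A ⊆ Finset.univ.filter (fun c => i ∈ P c) → f i A ⊆ A)
    (hpi : ∀ (i : I) (A B : Finset C),
      A ⊆ Finset.univ.filter (fun c => i ∈ P c) →
      B ⊆ Finset.univ.filter (fun c => i ∈ P c) →
      f i (A ∪ B) = f i (f i A ∪ B))
    (S T : Finset C)
    (hS0 : ∀ i : I, f i (S.filter (fun c => i ∈ P c)) = S.filter (fun c => i ∈ P c))
    (hSstar : ∀ b ∉ S, ∃ i ∈ P b, b ∉ f i (S.filter (fun c => i ∈ P c) ∪ {b}))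
    (hT0 : ∀ i : I, f i (T.filter (fun c => i ∈ P c)) = T.filter (fun c => i ∈ P c))
    (hST : ∀ i : I,
      f i (S.filter (fun c => i ∈ P c) ∪ T.filter (fun c => i ∈ P c)) ⊆
        T.filter (fun c => i ∈ P c)) :
    S = T := by
  set D : I → Finset C := fun i => Finset.univ.filter (fun c => i ∈ P c) with hD
  have hSD : ∀ i, S.filter (fun c => i ∈ P c) ⊆ D i := by
    intro i c hc
    simp only [hD, Finset.mem_filter, Finset.mem_univ, true_and]
    exact (Finset.mem_filter.mp hc).2
  have hTD : ∀ i, T.filter (fun c => i ∈ P c) ⊆ D i := by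
    intro i c hc
    simp only [hD, Finset.mem_filter, Finset.mem_univ, true_and]
    exact (Finset.mem_filter.mp hc).2
  -- Chernoff property from path independence
  have chernoff : ∀ (i : I) (A B : Finset C), A ⊆ B → B ⊆ D i →
      ∀ x ∈ f i B, x ∈ A → x ∈ f i A := by
    intro i A B hAB hBD x hxB hxA
    have hAD : A ⊆ D i := hAB.trans hBD
    have h1 : A ∪ (B \ A) = B := Finset.union_sdiff_of_subset hAB
    have h2 : f i B = f i (f i A ∪ (B \ A)) := by
      conv_lhs => rw [← h1]
      exact hpi i A (B \ A) hAD (Finset.sdiff_subset.trans hBD)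
    have h3 : f i (f i A ∪ (B \ A)) ⊆ f i A ∪ (B \ A) :=
      hf i _ (Finset.union_subset ((hf i A hAD).trans hAD) (Finset.sdiff_subset.trans hBD))
    have hx : x ∈ f i A ∪ (B \ A) := h3 (h2 ▸ hxB)
    rcases Finset.mem_union.mp hx with h | h
    · exact h
    · exact absurd (Finset.mem_sdiff.mp h).2 (not_not.mpr hxA)
  -- f i (S(i) ∪ T(i)) = T(i)
  have key : ∀ i, f i (S.filter (fun c => i ∈ P c) ∪ T.filter (fun c => i ∈ P c))
      = T.filter (fun c => i ∈ P c) := by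
    intro i
    have h1 := hpi i (S.filter (fun c => i ∈ P c) ∪ T.filter (fun c => i ∈ P c))
      (T.filter (fun c => i ∈ P c)) (Finset.union_subset (hSD i) (hTD i)) (hTD i)
    rw [Finset.union_assoc, Finset.union_self] at h1
    rw [h1, Finset.union_eq_right.mpr (hST i), hT0 i]
  -- T ⊆ S
  have hTS : T ⊆ S := by
    intro b hbT
    by_contra hbS
    obtain ⟨i, hiP, hb⟩ := hSstar b hbS
    have hbTi : b ∈ T.filter (fun c => i ∈ P c) := Finset.mem_filter.mpr ⟨hbT, hiP⟩
    have hbB : b ∈ f i (S.filter (fun c => i ∈ P c) ∪ T.filter (fun c => i ∈ P c)) := by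
      rw [key i]; exact hbTi
    have hsub : S.filter (fun c => i ∈ P c) ∪ {b} ⊆
        S.filter (fun c => i ∈ P c) ∪ T.filter (fun c => i ∈ P c) := by
      apply Finset.union_subset Finset.subset_union_left
      intro x hx
      rw [Finset.mem_singleton] at hx
      subst hx
      exact Finset.mem_union_right _ hbTi
    exact hb (chernoff i _ _ hsub (Finset.union_subset (hSD i) (hTD i)) b hbB
      (Finset.mem_union_right _ (Finset.mem_singleton_self b)))
  -- S(i) = T(i) for all i
  have hSTi : ∀ i, S.filter (fun c => i ∈ P c) = T.filter (fun c => i ∈ P c) := by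
    intro i
    have hsub : T.filter (fun c => i ∈ P c) ⊆ S.filter (fun c => i ∈ P c) :=
      Finset.filter_subset_filter _ hTS
    have := key i
    rw [Finset.union_eq_left.mpr hsub, hS0 i] at this
    exact this
  apply Finset.Subset.antisymm _ hTS
  intro c hcS
  obtain ⟨i, hi⟩ := hP c
  have : c ∈ S.filter (fun c => i ∈ P c) := Finset.mem_filter.mpr ⟨hcS, hi⟩
  rw [hSTi i] at this
  exact (Finset.mem_filter.mp this).1
end

section
/- In a contract network (I, C) with path-independent, non-empty-valued choice functions f_i, every stable contract system is meta-stable: if S satisfies (S0) f_i(S(i)) = S(i) for all i and (S*) every b ∉ S has some participant i with b ∉ f_i(S(i) ∪ {b}), then no contract d ∈ C dominates S, where d dominates S means that for every participant i of d, either S(i) = ∅ or some s ∈ S(i) satisfies s ∉ f_i({s, d}). -/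
theorem stable_is_metastable {I C : Type*} [Fintype I] [Fintype C] [DecidableEq I] [DecidableEq C]
    (P : C → Finset I) (hP : ∀ c, (P c).Nonempty)
    (f : I → Finset C → Finset C)
    (hf : ∀ (i : I) (A : Finset C),
      A ⊆ Finset.univ.filter (fun c => i ∈ P c) → f i A ⊆ A)
    (hpi : ∀ (i : I) (A B : Finset C),
      A ⊆ Finset.univ.filter (fun c => i ∈ P c) →
      B ⊆ Finset.univ.filter (fun c => i ∈ P c) →
      f i (A ∪ B) = f i (f i A ∪ B))
    (hne : ∀ (i : I) (A : Finset C),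
      A ⊆ Finset.univ.filter (fun c => i ∈ P c) → A.Nonempty → (f i A).Nonempty)
    (S : Finset C)
    (hS0 : ∀ i : I, f i (S.filter (fun c => i ∈ P c)) = S.filter (fun c => i ∈ P c))
    (hSstar : ∀ b ∉ S, ∃ i ∈ P b, b ∉ f i (S.filter (fun c => i ∈ P c) ∪ {b})) :
    ¬ ∃ d : C, ∀ i ∈ P d,
      S.filter (fun c => i ∈ P c) = ∅ ∨
      ∃ s ∈ S.filter (fun c => i ∈ P c), s ∉ f i {s, d} := by
  classical
  rintro ⟨d, hdom⟩
  set U : I → Finset C := fun i => Finset.univ.filter (fun c => i ∈ P c) with hU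
  have hmemU : ∀ i c, c ∈ U i ↔ i ∈ P c := by
    intro i c; simp [hU]
  have hSiU : ∀ i : I, S.filter (fun c => i ∈ P c) ⊆ U i := by
    intro i c hc
    exact (hmemU i c).mpr (Finset.mem_filter.mp hc).2
  -- the core contradiction
  have key : ∀ i ∈ P d, ∀ s ∈ S.filter (fun c => i ∈ P c),
      s ∉ f i {s, d} →
      f i (S.filter (fun c => i ∈ P c) ∪ {d}) = S.filter (fun c => i ∈ P c) → False := by
    intro i hid s hs hsf hfeq
    set Si := S.filter (fun c => i ∈ P c) with hSi
    have hsP : i ∈ P s := (Finset.mem_filter.mp hs).2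
    have hsdU : ({s, d} : Finset C) ⊆ U i := by
      intro c hc
      rcases Finset.mem_insert.mp hc with rfl | hc
      · exact (hmemU i c).mpr hsP
      · rw [Finset.mem_singleton] at hc; subst hc; exact (hmemU i c).mpr hid
    have hsned : s ≠ d := by
      rintro rfl
      have h1 : ({s, s} : Finset C) = {s} := by simp
      have h2 : (f i {s, s}).Nonempty := hne i {s, s} hsdU (by simp)
      have h3 : f i {s, s} ⊆ {s, s} := hf i {s, s} hsdU
      obtain ⟨x, hx⟩ := h2
      have := h3 hx
      simp at this
      subst this
      exact hsf hx
    have hfsd : f i {s, d} ⊆ {d} := by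
      intro x hx
      have := hf i {s, d} hsdU hx
      rcases Finset.mem_insert.mp this with rfl | h
      · exact absurd hx hsf
      · exact h
    have hdiffU : Si \ {s} ⊆ U i := fun c hc => hSiU i (Finset.mem_sdiff.mp hc).1
    have hsplit : Si ∪ {d} = {s, d} ∪ (Si \ {s}) := by
      ext c
      simp only [Finset.mem_union, Finset.mem_insert, Finset.mem_singleton, Finset.mem_sdiff]
      constructor
      · rintro (hc | rfl)
        · by_cases h : c = s
          · exact Or.inl (Or.inl h)
          · exact Or.inr ⟨hc, h⟩
        · exact Or.inl (Or.inr rfl)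
      · rintro ((rfl | rfl) | ⟨hc, _⟩)
        · exact Or.inl hs
        · exact Or.inr rfl
        · exact Or.inl hc
    have hpi1 : f i (Si ∪ {d}) = f i (f i {s, d} ∪ (Si \ {s})) := by
      rw [hsplit]; exact hpi i {s, d} (Si \ {s}) hsdU hdiffU
    have hsub : f i (f i {s, d} ∪ (Si \ {s})) ⊆ {d} ∪ (Si \ {s}) := by
      have h1 : f i {s, d} ∪ (Si \ {s}) ⊆ U i :=
        Finset.union_subset (fun c hc => hsdU (hf i {s, d} hsdU hc)) hdiffU
      refine (hf i _ h1).trans (Finset.union_subset_union hfsd le_rfl)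
    have hsin : s ∈ f i (Si ∪ {d}) := by rw [hfeq]; exact hs
    have : s ∈ ({d} : Finset C) ∪ (Si \ {s}) := hsub (hpi1 ▸ hsin)
    rcases Finset.mem_union.mp this with h | h
    · exact hsned (Finset.mem_singleton.mp h)
    · exact (Finset.mem_sdiff.mp h).2 (Finset.mem_singleton.mpr rfl)
  by_cases hdS : d ∈ S
  · obtain ⟨i, hid⟩ := hP d
    have hdSi : d ∈ S.filter (fun c => i ∈ P c) := Finset.mem_filter.mpr ⟨hdS, hid⟩
    rcases hdom i hid with hempty | ⟨s, hs, hsf⟩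
    · rw [hempty] at hdSi; exact absurd hdSi (Finset.notMem_empty d)
    · refine key i hid s hs hsf ?_
      have : S.filter (fun c => i ∈ P c) ∪ {d} = S.filter (fun c => i ∈ P c) := by
        apply Finset.union_eq_left.mpr
        simpa using hdSi
      rw [this, hS0 i]
  · obtain ⟨i, hid, hdnot⟩ := hSstar d hdS
    set Si := S.filter (fun c => i ∈ P c) with hSi
    have hdU : ({d} : Finset C) ⊆ U i := by
      intro c hc; rw [Finset.mem_singleton] at hc; subst hc; exact (hmemU i c).mpr hid
    have hMU : Si ∪ {d} ⊆ U i := Finset.union_subset (hSiU i) hdU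
    rcases hdom i hid with hempty | ⟨s, hs, hsf⟩
    · have h1 : Si ∪ {d} = {d} := by rw [hSi, hempty]; simp
      have h2 : (f i {d}).Nonempty := hne i {d} hdU (by simp)
      have h3 : f i {d} ⊆ {d} := hf i {d} hdU
      obtain ⟨x, hx⟩ := h2
      have hx' := Finset.mem_singleton.mp (h3 hx)
      subst hx'
      rw [h1] at hdnot
      exact hdnot hx
    · -- d ∉ f i (Si ∪ {d}), so f i (Si ∪ {d}) ⊆ Si; by outcast f i Si = f i (Si ∪ {d})
      have hTsub : f i (Si ∪ {d}) ⊆ Si := by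
        intro x hx
        rcases Finset.mem_union.mp (hf i _ hMU hx) with h | h
        · exact h
        · rw [Finset.mem_singleton] at h; subst h; exact absurd hx hdnot
      have houtcast : f i (Si ∪ {d}) = Si := by
        have h1 : f i ((Si ∪ {d}) ∪ Si) = f i (f i (Si ∪ {d}) ∪ Si) :=
          hpi i (Si ∪ {d}) Si hMU (hSiU i)
        have h2 : (Si ∪ {d}) ∪ Si = Si ∪ {d} := by
          rw [Finset.union_comm Si ({d} : Finset C), Finset.union_assoc]; simp
        have h3 : f i (Si ∪ {d}) ∪ Si = Si := Finset.union_eq_right.mpr hTsub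
        rw [h2, h3] at h1
        rw [h1, hS0 i]
      exact key i hid s hs hsf houtcast
end

section
/- Let I be a finite set and C a finite set of partially defined real-valued functions on I such that for each i ∈ I there is an 'autarkic' function in C defined exactly on {i}. Then there exists a compromise function x : I → ℝ, namely: (1) for every c ∈ C there exists i ∈ Dom(c) with c(i) ≤ x(i); (2) for every i ∈ I there exists c ∈ C with i ∈ Dom(c) and x(j) ≤ c(j) for all j ∈ Dom(c). -/
theorem compromise_exists {I C : Type*} [Fintype I] [Fintype C]
    (Dom : C → Finset I) (hDom : ∀ c, (Dom c).Nonempty)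
    (val : C → I → ℝ)
    (haut : ∀ i : I, ∃ c : C, Dom c = {i}) :
    ∃ x : I → ℝ,
      (∀ c : C, ∃ i ∈ Dom c, val c i ≤ x i) ∧
      (∀ i : I, ∃ c : C, i ∈ Dom c ∧ ∀ j ∈ Dom c, x j ≤ val c j) := by
  classical
  have aux : ∀ n (S : Finset I) (dom : C → Finset I) (D : Finset C),
      S.card ≤ n →
      (∀ c ∈ D, (dom c).Nonempty ∧ dom c ⊆ S) →
      (∀ i ∈ S, ∃ c ∈ D, dom c = {i}) →
      ∃ x : I → ℝ,
        (∀ c ∈ D, ∃ i ∈ dom c, val c i ≤ x i) ∧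
        (∀ i ∈ S, ∃ c ∈ D, i ∈ dom c ∧ ∀ j ∈ dom c, x j ≤ val c j) := by
    intro n
    induction n with
    | zero =>
      intro S dom D hcard hsub hautS
      have hSempty : S = ∅ := Finset.card_eq_zero.mp (Nat.le_zero.mp hcard)
      refine ⟨fun _ => 0, ?_, ?_⟩
      · intro c hc
        obtain ⟨⟨i, hi⟩, hsubS⟩ := hsub c hc
        exact absurd (hsubS hi) (by simp [hSempty])
      · intro i hi
        exact absurd hi (by simp [hSempty])
    | succ n ih =>
      intro S dom D hcard hsub hautS
      by_cases hS : S.Nonempty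
      · obtain ⟨i0, hi0⟩ := hS
        obtain ⟨c0, hc0D, _⟩ := hautS i0 hi0
        have hDne : D.Nonempty := ⟨c0, hc0D⟩
        set f : C → ℝ := fun c =>
          if h : (dom c).Nonempty then (dom c).inf' h (val c) else 0 with hf
        obtain ⟨cs, hcsD, hmax⟩ := D.exists_max_image f hDne
        have hcsne : (dom cs).Nonempty := (hsub cs hcsD).1
        have hfcs : f cs = (dom cs).inf' hcsne (val cs) := dif_pos hcsne
        set S' : Finset I := S \ dom cs with hS'
        set D' : Finset C := D.filter (fun c =>
          (dom c \ dom cs).Nonempty ∧ ∀ j ∈ dom c ∩ dom cs, f cs ≤ val c j)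
          with hD'
        have hcard' : S'.card ≤ n := by
          have h1 : S'.card = S.card - (dom cs).card :=
            Finset.card_sdiff_of_subset (hsub cs hcsD).2
          have h2 : 1 ≤ (dom cs).card := Finset.card_pos.mpr hcsne
          omega
        have hsub' : ∀ c ∈ D', (dom c \ dom cs).Nonempty ∧ dom c \ dom cs ⊆ S' := by
          intro c hc
          rw [hD', Finset.mem_filter] at hc
          refine ⟨hc.2.1, ?_⟩
          intro j hj
          rw [Finset.mem_sdiff] at hj ⊢
          exact ⟨(hsub c hc.1).2 hj.1, hj.2⟩
        have haut' : ∀ i ∈ S', ∃ c ∈ D', dom c \ dom cs = {i} := by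
          intro i hi
          rw [hS', Finset.mem_sdiff] at hi
          obtain ⟨c, hcD, hceq⟩ := hautS i hi.1
          have hdiff : dom c \ dom cs = {i} := by
            rw [hceq]
            apply Finset.sdiff_eq_self_of_disjoint
            simp [Finset.disjoint_left, hi.2]
          refine ⟨c, ?_, hdiff⟩
          rw [hD', Finset.mem_filter]
          refine ⟨hcD, by rw [hdiff]; exact ⟨i, Finset.mem_singleton_self i⟩, ?_⟩
          intro j hj
          rw [hceq, Finset.mem_inter, Finset.mem_singleton] at hj
          exact absurd (hj.1 ▸ hj.2) hi.2
        obtain ⟨xr, hxr1, hxr2⟩ := ih S' (fun c => dom c \ dom cs) D' hcard' hsub' haut'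
        refine ⟨fun i => if i ∈ dom cs then f cs else xr i, ?_, ?_⟩
        · -- condition (1)
          intro c hc
          by_cases hcD' : c ∈ D'
          · obtain ⟨i, hi, hvi⟩ := hxr1 c hcD'
            rw [Finset.mem_sdiff] at hi
            exact ⟨i, hi.1, by simpa [hi.2] using hvi⟩
          · rw [hD', Finset.mem_filter, not_and, not_and_or] at hcD'
            rcases hcD' hc with hempty | hbad
            · -- dom c ⊆ dom cs; use argmin of c
              have hcne : (dom c).Nonempty := (hsub c hc).1
              obtain ⟨i, hi, hieq⟩ := Finset.exists_mem_eq_inf' hcne (val c)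
              have hics : i ∈ dom cs := by
                by_contra h
                exact hempty ⟨i, Finset.mem_sdiff.mpr ⟨hi, h⟩⟩
              refine ⟨i, hi, ?_⟩
              have : f c = (dom c).inf' hcne (val c) := dif_pos hcne
              simp only [hics, if_pos]
              calc val c i = f c := by rw [this, hieq]
                _ ≤ f cs := hmax c hc
            · push_neg at hbad
              obtain ⟨j, hj, hjlt⟩ := hbad
              rw [Finset.mem_inter] at hj
              exact ⟨j, hj.1, by simp [hj.2]; exact hjlt.le⟩
        · -- condition (2)
          intro i hi
          by_cases hics : i ∈ dom cs
          · refine ⟨cs, hcsD, hics, ?_⟩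
            intro j hj
            simp only [hj, if_pos]
            rw [hfcs]
            exact Finset.inf'_le (val cs) hj
          · have hiS' : i ∈ S' := Finset.mem_sdiff.mpr ⟨hi, hics⟩
            obtain ⟨c, hcD', hic, hval⟩ := hxr2 i hiS'
            have hcfilter := Finset.mem_filter.mp (hD' ▸ hcD')
            refine ⟨c, hcfilter.1, (Finset.mem_sdiff.mp hic).1, ?_⟩
            intro j hj
            by_cases hjcs : j ∈ dom cs
            · simp only [hjcs, if_pos]
              exact hcfilter.2.2 j (Finset.mem_inter.mpr ⟨hj, hjcs⟩)
            · simp only [hjcs, if_neg, if_false]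
              exact hval j (Finset.mem_sdiff.mpr ⟨hj, hjcs⟩)
      · -- S empty
        rw [Finset.not_nonempty_iff_eq_empty] at hS
        refine ⟨fun _ => 0, ?_, ?_⟩
        · intro c hc
          obtain ⟨⟨i, hi⟩, hsubS⟩ := hsub c hc
          exact absurd (hsubS hi) (by simp [hS])
        · intro i hi
          exact absurd hi (by simp [hS])
  obtain ⟨x, h1, h2⟩ := aux (Finset.univ : Finset I).card Finset.univ Dom Finset.univ
    le_rfl (fun c _ => ⟨hDom c, Finset.subset_univ _⟩)
    (fun i _ => by obtain ⟨c, hc⟩ := haut i; exact ⟨c, Finset.mem_univ c, hc⟩)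
  exact ⟨x, fun c => h1 c (Finset.mem_univ c), fun i => by obtain ⟨c, _, h⟩ := h2 i (Finset.mem_univ i); exact ⟨c, h⟩⟩
end

section
/- Consider a finite contract network (I, C) where the preferences of each agent i are given by a linear order ≤_i on C(i), and each agent has an autarkic contract (a contract whose participant set is exactly {i}). Then there exists a meta-stable contract system S ⊆ C: no contract d ∈ C dominates S, where d dominates S means that for every i ∈ P(d), either S(i) = ∅ or some s ∈ S(i) satisfies s <_i d. -/
theorem metastable_exists_linear {I C : Type*} [Fintype I] [Fintype C]
    [DecidableEq I] [DecidableEq C]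
    (P : C → Finset I) (hP : ∀ c, (P c).Nonempty)
    (r : I → C → C → Prop)
    (hrefl : ∀ i c, i ∈ P c → r i c c)
    (htrans : ∀ i a b c, i ∈ P a → i ∈ P b → i ∈ P c → r i a b → r i b c → r i a c)
    (hantisymm : ∀ i a b, i ∈ P a → i ∈ P b → r i a b → r i b a → a = b)
    (htotal : ∀ i a b, i ∈ P a → i ∈ P b → r i a b ∨ r i b a)
    (haut : ∀ i : I, ∃ c : C, P c = {i}) :
    ∃ S : Finset C, ¬ ∃ d : C, ∀ i ∈ P d,
      S.filter (fun c => i ∈ P c) = ∅ ∨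
      ∃ s ∈ S.filter (fun c => i ∈ P c), r i s d ∧ s ≠ d := by
  classical
  -- `N i x` counts the contracts of agent `i` weakly below `x` in `i`'s order.
  set N : I → C → ℕ := fun i x =>
    (Finset.univ.filter (fun c => i ∈ P c ∧ r i c x)).card with hNdef
  have hNlt : ∀ i x y, i ∈ P x → i ∈ P y → r i x y → ¬ r i y x → N i x < N i y := by
    intro i x y hx hy hxy hnyx
    apply Finset.card_lt_card
    constructor
    · intro c hc
      simp only [Finset.mem_filter, Finset.mem_univ, true_and] at hc ⊢
      exact ⟨hc.1, htrans i c x y hc.1 hx hy hc.2 hxy⟩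
    · intro hsub
      have hymem : y ∈ Finset.univ.filter (fun c => i ∈ P c ∧ r i c y) := by
        simp only [Finset.mem_filter, Finset.mem_univ, true_and]
        exact ⟨hy, hrefl i y hy⟩
      have := hsub hymem
      simp only [Finset.mem_filter, Finset.mem_univ, true_and] at this
      exact hnyx this.2
  -- every nonempty family of contracts of agent `i` has a maximum in `i`'s order
  have hmax : ∀ (i : I) (D : Finset C), D.Nonempty → (∀ c ∈ D, i ∈ P c) →
      ∃ m ∈ D, ∀ c ∈ D, r i c m := by
    intro i D hne hsub
    obtain ⟨m, hmD, hm⟩ := D.exists_max_image (fun c => N i c) hne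
    refine ⟨m, hmD, fun c hc => ?_⟩
    by_contra hrc
    rcases htotal i m c (hsub m hmD) (hsub c hc) with h | h
    · exact absurd (hm c hc) (Nat.not_le.mpr (hNlt i m c (hsub m hmD) (hsub c hc) h hrc))
    · exact hrc h
  -- "good" threshold functions
  set Good : (I → C) → Prop := fun t =>
    (∀ i, i ∈ P (t i)) ∧ (∀ d, ∃ i ∈ P d, r i d (t i)) with hGooddef
  have hGood0 : ∃ t, Good t := by
    have h1 : ∀ i : I, ∃ m, (i ∈ P m) ∧ ∀ c, i ∈ P c → r i c m := by
      intro i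
      obtain ⟨a, ha⟩ := haut i
      have hane : a ∈ Finset.univ.filter (fun c => i ∈ P c) := by
        simp [ha]
      obtain ⟨m, hmD, hm⟩ := hmax i _ ⟨a, hane⟩
        (fun c hc => (Finset.mem_filter.mp hc).2)
      refine ⟨m, (Finset.mem_filter.mp hmD).2, fun c hc => hm c ?_⟩
      simp [hc]
    choose t ht1 ht2 using h1
    refine ⟨t, ht1, fun d => ?_⟩
    obtain ⟨i, hi⟩ := hP d
    exact ⟨i, hi, ht2 i d hi⟩
  set Φ : (I → C) → ℕ := fun t => ∑ i, N i (t i) with hΦdef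
  obtain ⟨n, hnmem, hmin⟩ :=
    (wellFounded_lt (α := ℕ)).has_min {n | ∃ t, Good t ∧ Φ t = n}
      (by obtain ⟨t, ht⟩ := hGood0; exact ⟨Φ t, t, ht, rfl⟩)
  obtain ⟨t, htG, htn⟩ := hnmem
  subst htn
  -- key claim: for the minimal good t, every agent has a contract above all thresholds
  have key : ∀ i, ∃ m, i ∈ P m ∧ ∀ j ∈ P m, r j (t j) m := by
    intro i
    by_contra hno
    push_neg at hno
    set D : Finset C := Finset.univ.filter
      (fun c => i ∈ P c ∧ ∀ j ∈ P c, j ≠ i → r j (t j) c) with hDdef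
    have hDne : D.Nonempty := by
      obtain ⟨a, ha⟩ := haut i
      refine ⟨a, ?_⟩
      simp only [hDdef, Finset.mem_filter, Finset.mem_univ, true_and]
      refine ⟨by simp [ha], fun j hj hji => absurd ?_ hji⟩
      rw [ha] at hj
      simpa using hj
    have hDP : ∀ c ∈ D, i ∈ P c := fun c hc => ((Finset.mem_filter.mp hc).2).1
    obtain ⟨m, hmD, hmmax⟩ := hmax i D hDne hDP
    have hmP : i ∈ P m := hDP m hmD
    have hmprop : ∀ j ∈ P m, j ≠ i → r j (t j) m := ((Finset.mem_filter.mp hmD).2).2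
    have hnotim : ¬ r i (t i) m := by
      obtain ⟨j, hjm, hj⟩ := hno m hmP
      by_cases hji : j = i
      · exact hji ▸ hj
      · exact absurd (hmprop j hjm hji) hj
    have hmt : r i m (t i) := by
      rcases htotal i (t i) m (htG.1 i) hmP with h | h
      · exact absurd h hnotim
      · exact h
    set t' : I → C := Function.update t i m with ht'def
    have hG1 : ∀ j, j ∈ P (t' j) := by
      intro j
      by_cases hji : j = i
      · subst hji
        simpa [ht'def, Function.update_self] using hmP
      · simpa [ht'def, Function.update_of_ne hji] using htG.1 j
    have hG2 : ∀ d, ∃ j ∈ P d, r j d (t' j) := by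
      intro d
      obtain ⟨w, hwd, hw⟩ := htG.2 d
      by_cases hwi : w = i
      · subst hwi
        by_cases hdm : r w d m
        · exact ⟨w, hwd, by simpa [ht'def, Function.update_self] using hdm⟩
        · by_cases hall : ∀ j ∈ P d, j ≠ w → r j (t j) d
          · have hdD : d ∈ D := by
              simp only [hDdef, Finset.mem_filter, Finset.mem_univ, true_and]
              exact ⟨hwd, hall⟩
            exact absurd (hmmax d hdD) hdm
          · push_neg at hall
            obtain ⟨j, hjd, hji, hj⟩ := hall
            have hjr : r j d (t j) := by
              rcases htotal j (t j) d (htG.1 j) hjd with h | h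
              · exact absurd h hj
              · exact h
            exact ⟨j, hjd, by simpa [ht'def, Function.update_of_ne hji] using hjr⟩
      · exact ⟨w, hwd, by simpa [ht'def, Function.update_of_ne hwi] using hw⟩
    have hΦlt : Φ t' < Φ t := by
      apply Finset.sum_lt_sum
      · intro j _
        by_cases hji : j = i
        · rw [hji]
          simp only [ht'def, Function.update_self]
          exact Nat.le_of_lt (hNlt i m (t i) hmP (htG.1 i) hmt hnotim)
        · simp [ht'def, Function.update_of_ne hji]
      · refine ⟨i, Finset.mem_univ i, ?_⟩
        simp only [ht'def, Function.update_self]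
        exact hNlt i m (t i) hmP (htG.1 i) hmt hnotim
    exact hmin (Φ t') ⟨t', ⟨hG1, hG2⟩, rfl⟩ hΦlt
  choose g hg1 hg2 using key
  refine ⟨Finset.univ.image g, ?_⟩
  rintro ⟨d, hdom⟩
  obtain ⟨i, hid, hrd⟩ := htG.2 d
  rcases hdom i hid with hemp | ⟨s, hs, hrs, hne⟩
  · have hgi : g i ∈ (Finset.univ.image g).filter (fun c => i ∈ P c) := by
      exact Finset.mem_filter.mpr ⟨Finset.mem_image_of_mem g (Finset.mem_univ i), hg1 i⟩
    rw [hemp] at hgi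
    exact absurd hgi (Finset.notMem_empty _)
  · obtain ⟨hsS, his⟩ := Finset.mem_filter.mp hs
    obtain ⟨j, _, rfl⟩ := Finset.mem_image.mp hsS
    have h1 : r i (t i) (g j) := hg2 j i his
    have h2 : r i (t i) d := htrans i (t i) (g j) d (htG.1 i) his hid h1 hrs
    have h3 : d = t i := hantisymm i d (t i) hid (htG.1 i) hrd h2
    have h4 : r i d (g j) := by rw [h3]; exact h1
    exact hne (hantisymm i (g j) d his hid hrs h4)
end

section
/- In a contract network (I, C) where each agent i has an autarkic contract and each f_i is a path-independent non-empty-valued choice function: a meta-stable system S is minimal (no proper subset of S is meta-stable) if and only if every contract s ∈ S has a monogamous participant, i.e., some i ∈ P(s) with S(i) = {s}. -/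
theorem minimal_metastable_iff_monogamous {I C : Type*} [Fintype I] [Fintype C]
    [DecidableEq I] [DecidableEq C]
    (P : C → Finset I) (hP : ∀ c, (P c).Nonempty)
    (f : I → Finset C → Finset C)
    (hf : ∀ (i : I) (A : Finset C),
      A ⊆ Finset.univ.filter (fun c => i ∈ P c) → f i A ⊆ A)
    (hpi : ∀ (i : I) (A B : Finset C),
      A ⊆ Finset.univ.filter (fun c => i ∈ P c) →
      B ⊆ Finset.univ.filter (fun c => i ∈ P c) →
      f i (A ∪ B) = f i (f i A ∪ B))
    (hne : ∀ (i : I) (A : Finset C),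
      A ⊆ Finset.univ.filter (fun c => i ∈ P c) → A.Nonempty → (f i A).Nonempty)
    (haut : ∀ i : I, ∃ c : C, P c = {i})
    (S : Finset C)
    (hmeta : ¬ ∃ d : C, ∀ i ∈ P d,
      S.filter (fun c => i ∈ P c) = ∅ ∨
      ∃ s ∈ S.filter (fun c => i ∈ P c), s ∉ f i {s, d}) :
    ((∀ T : Finset C, T ⊂ S →
        ∃ d : C, ∀ i ∈ P d,
          T.filter (fun c => i ∈ P c) = ∅ ∨
          ∃ s ∈ T.filter (fun c => i ∈ P c), s ∉ f i {s, d}) ↔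
      (∀ s ∈ S, ∃ i ∈ P s, S.filter (fun c => i ∈ P c) = {s})) := by
  -- Meta-stability implies S(i) ≠ ∅ for every agent i.
  have hSne : ∀ i : I, S.filter (fun c => i ∈ P c) ≠ ∅ := by
    intro i h
    obtain ⟨a, ha⟩ := haut i
    refine hmeta ⟨a, fun j hj => ?_⟩
    rw [ha, Finset.mem_singleton] at hj
    subst hj
    exact Or.inl h
  constructor
  · intro hmin s hs
    obtain ⟨d, hd⟩ := hmin (S.erase s) (Finset.erase_ssubset hs)
    by_contra hno
    push_neg at hno
    apply hmeta
    refine ⟨d, fun i hi => ?_⟩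
    rcases hd i hi with h | ⟨t, ht, htf⟩
    · exfalso
      have hsub2 : S.filter (fun c => i ∈ P c) ⊆ {s} := by
        intro c hc
        rw [Finset.mem_filter] at hc
        by_contra hcs
        rw [Finset.mem_singleton] at hcs
        have hmem : c ∈ (S.erase s).filter (fun c => i ∈ P c) := by
          rw [Finset.mem_filter, Finset.mem_erase]
          exact ⟨⟨hcs, hc.1⟩, hc.2⟩
        rw [h] at hmem
        exact Finset.notMem_empty c hmem
      rcases Finset.subset_singleton_iff.mp hsub2 with h' | h'
      · exact hSne i h'
      · have hiPs : i ∈ P s := by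
          have : s ∈ S.filter (fun c => i ∈ P c) := by
            rw [h']; exact Finset.mem_singleton_self s
          exact (Finset.mem_filter.mp this).2
        exact hno i hiPs h'
    · exact Or.inr ⟨t,
        Finset.filter_subset_filter _ (Finset.erase_subset s S) ht, htf⟩
  · intro hmono T hTS
    obtain ⟨s, hsS, hsT⟩ := Finset.exists_of_ssubset hTS
    obtain ⟨i, hiPs, hSi⟩ := hmono s hsS
    obtain ⟨a, ha⟩ := haut i
    refine ⟨a, fun j hj => ?_⟩
    rw [ha, Finset.mem_singleton] at hj
    subst hj
    left
    rw [Finset.eq_empty_iff_forall_notMem]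
    intro c hc
    have hcS : c ∈ S.filter (fun c => j ∈ P c) :=
      Finset.filter_subset_filter _ hTS.subset hc
    rw [hSi, Finset.mem_singleton] at hcS
    subst hcS
    exact hsT (Finset.mem_filter.mp hc).1
end

section
/- In a finite contract network (I, C) where the preference of each agent i is a linear order ≤_i on C(i), every stable contract system S is a minimal meta-stable system: S is meta-stable and every contract s ∈ S has a participant i with S(i) = {s}. -/
theorem stable_is_minimal_metastable_linear {I C : Type*} [Fintype I] [Fintype C]
    [DecidableEq I] [DecidableEq C]
    (P : C → Finset I) (hP : ∀ c, (P c).Nonempty)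
    (r : I → C → C → Prop)
    (hrefl : ∀ i c, i ∈ P c → r i c c)
    (htrans : ∀ i a b c, i ∈ P a → i ∈ P b → i ∈ P c → r i a b → r i b c → r i a c)
    (hantisymm : ∀ i a b, i ∈ P a → i ∈ P b → r i a b → r i b a → a = b)
    (htotal : ∀ i a b, i ∈ P a → i ∈ P b → r i a b ∨ r i b a)
    (S : Finset C)
    (hS0 : ∀ i : I, ∀ s ∈ S.filter (fun c => i ∈ P c),
      ∀ t ∈ S.filter (fun c => i ∈ P c), s = t)
    (hSstar : ∀ b ∉ S, ∃ i ∈ P b,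
      ∃ s ∈ S.filter (fun c => i ∈ P c), r i b s ∧ b ≠ s) :
    (¬ ∃ d : C, ∀ i ∈ P d,
      S.filter (fun c => i ∈ P c) = ∅ ∨
      ∃ s ∈ S.filter (fun c => i ∈ P c), r i s d ∧ s ≠ d) ∧
    (∀ s ∈ S, ∃ i ∈ P s, S.filter (fun c => i ∈ P c) = {s}) := by
  constructor
  · rintro ⟨d, hd⟩
    by_cases hdS : d ∈ S
    · obtain ⟨i, hi⟩ := hP d
      have hdmem : d ∈ S.filter (fun c => i ∈ P c) := by
        simp [Finset.mem_filter, hdS, hi]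
      rcases hd i hi with h | ⟨s, hs, hrs, hsd⟩
      · rw [h] at hdmem; simp at hdmem
      · exact hsd (hS0 i s hs d hdmem)
    · obtain ⟨i, hi, s, hs, hds, hne⟩ := hSstar d hdS
      rcases hd i hi with h | ⟨s', hs', hrs', hne'⟩
      · rw [h] at hs; simp at hs
      · have := hS0 i s hs s' hs'
        subst this
        have hiPs : i ∈ P s := (Finset.mem_filter.mp hs).2
        exact hne (hantisymm i d s hi hiPs hds hrs')
  · intro s hs
    obtain ⟨i, hi⟩ := hP s
    refine ⟨i, hi, ?_⟩
    ext t
    simp only [Finset.mem_filter, Finset.mem_singleton]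
    constructor
    · rintro ⟨htS, hti⟩
      exact (hS0 i t (Finset.mem_filter.mpr ⟨htS, hti⟩) s
        (Finset.mem_filter.mpr ⟨hs, hi⟩))
    · rintro rfl; exact ⟨hs, hi⟩
end
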